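/- For every integer n ≥ 0 one has Σ_{i=0}^{n} (−1)^i · [ (q)_n / ((q)_i (q)_{n−i}) ] · (q^n z)_i · q^{i(i+1)/2 − i·n} = q^{n²} z^n, as an identity in ℤ[q, q⁻¹, z]. (Here (q)_n/((q)_i(q)_{n−i}) is the Gaussian binomial coefficient, a polynomial in q.) -/

import Mathlib

/-!
STATEMENT 4: for every `n ≥ 0`,
`Σ_{i=0}^{n} (-1)^i [(q)_n/((q)_i (q)_{n-i})] (q^n z)_i q^{i(i+1)/2 - i n} = q^{n²} z^n`,
an identity of Laurent polynomials, stated in the rational function field `ℚ(q,z)`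
(in which `ℤ[q,q⁻¹,z]` embeds).
-/

noncomputable section

open scoped BigOperators

/-- The rational function field `ℚ(q,z)`. -/
abbrev K : Type := FractionRing (MvPolynomial (Fin 2) ℚ)

def q : K := algebraMap (MvPolynomial (Fin 2) ℚ) K (MvPolynomial.X 0)
def z : K := algebraMap (MvPolynomial (Fin 2) ℚ) K (MvPolynomial.X 1)

/-- `(a)_n = ∏_{j=0}^{n-1} (1 - a q^j)`. -/
def poch (a : K) (n : ℕ) : K := ∏ j ∈ Finset.range n, (1 - a * q ^ j)

/-! ### Auxiliary machinery -/

lemma q_ne_zero : q ≠ 0 := by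
  intro h
  have h0 : (MvPolynomial.X 0 : MvPolynomial (Fin 2) ℚ) = 0 :=
    IsFractionRing.injective (MvPolynomial (Fin 2) ℚ) K (by simpa [q] using h)
  exact MvPolynomial.X_ne_zero _ h0

lemma q_pow_ne_one (m : ℕ) (hm : m ≠ 0) : q ^ m ≠ 1 := by
  intro h
  have h0 : (MvPolynomial.X 0 : MvPolynomial (Fin 2) ℚ) ^ m = 1 := by
    apply IsFractionRing.injective (MvPolynomial (Fin 2) ℚ) K
    simpa [q, map_pow] using h
  have h1 := congrArg (MvPolynomial.eval fun _ => (2 : ℚ)) h0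
  simp [map_pow] at h1
  have h2 : (1 : ℚ) < 2 ^ m := one_lt_pow₀ (by norm_num) hm
  rw [h1] at h2
  exact lt_irrefl _ h2

lemma one_sub_q_mul_pow_ne_zero (j : ℕ) : (1 : K) - q * q ^ j ≠ 0 := by
  have : q * q ^ j = q ^ (j + 1) := by ring
  rw [this]
  exact fun h => q_pow_ne_one (j + 1) (Nat.succ_ne_zero j) (by linear_combination -h)

lemma poch_q_ne_zero (m : ℕ) : poch q m ≠ 0 := by
  unfold poch
  rw [Finset.prod_ne_zero_iff]
  intro j _
  exact one_sub_q_mul_pow_ne_zero j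

lemma poch_zero (a : K) : poch a 0 = 1 := by simp [poch]

lemma poch_succ (a : K) (n : ℕ) : poch a (n + 1) = poch a n * (1 - a * q ^ n) := by
  simp [poch, Finset.prod_range_succ]

lemma poch_succ' (a : K) (n : ℕ) : poch a (n + 1) = (1 - a) * poch (q * a) n := by
  unfold poch
  rw [Finset.prod_range_succ']
  simp only [pow_zero, mul_one]
  rw [mul_comm]
  congr 1
  apply Finset.prod_congr rfl
  intro j _
  ring

/-- Gaussian binomial coefficient as an element of `K`, defined via Pascal's rule. -/
def gb : ℕ → ℕ → K
  | _, 0 => 1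
  | 0, _ + 1 => 0
  | n + 1, i + 1 => q ^ (i + 1) * gb n (i + 1) + gb n i

@[simp] lemma gb_zero (n : ℕ) : gb n 0 = 1 := by cases n <;> rfl

@[simp] lemma gb_zero_succ (i : ℕ) : gb 0 (i + 1) = 0 := rfl

lemma gb_succ_succ (n i : ℕ) : gb (n + 1) (i + 1) = q ^ (i + 1) * gb n (i + 1) + gb n i := rfl

lemma gb_of_lt : ∀ n i : ℕ, n < i → gb n i = 0 := by
  intro n
  induction n with
  | zero =>
    intro i hi
    match i, hi with
    | i + 1, _ => rfl
  | succ n ih =>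
    intro i hi
    match i, hi with
    | i + 1, hi =>
      rw [gb_succ_succ, ih (i + 1) (by omega), ih i (by omega)]
      ring

lemma gb_diag : ∀ n : ℕ, gb n n = 1 := by
  intro n
  induction n with
  | zero => rfl
  | succ n ih => rw [gb_succ_succ, gb_of_lt n (n + 1) (by omega), ih]; ring

lemma gb_eq_ratio : ∀ n i : ℕ, i ≤ n → gb n i = poch q n / (poch q i * poch q (n - i)) := by
  intro n
  induction n with
  | zero =>
    intro i hi
    interval_cases i
    simp [poch_zero]
  | succ n ih =>
    intro i hi
    match i with
    | 0 =>
      rw [gb_zero, poch_zero]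
      field_simp [poch_q_ne_zero]
      rfl
    | i + 1 =>
      rcases eq_or_lt_of_le hi with h | h
      · -- i + 1 = n + 1
        have : i = n := by omega
        subst this
        rw [gb_diag, Nat.sub_self, poch_zero]
        field_simp [poch_q_ne_zero]
      · -- i + 1 ≤ n
        have hin : i + 1 ≤ n := by omega
        obtain ⟨k, rfl⟩ : ∃ k, n = i + k + 1 := ⟨n - i - 1, by omega⟩
        rw [gb_succ_succ, ih (i + 1) hin, ih i (by omega)]
        have e1 : i + k + 1 - (i + 1) = k := by omega
        have e2 : i + k + 1 - i = k + 1 := by omega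
        have e3 : i + k + 1 + 1 - (i + 1) = k + 1 := by omega
        rw [e1, e2, e3]
        rw [poch_succ q (i + k + 1), poch_succ q k, poch_succ q i]
        have hP := poch_q_ne_zero (i + k + 1)
        have hPi := poch_q_ne_zero i
        have hPk := poch_q_ne_zero k
        have h1 := one_sub_q_mul_pow_ne_zero i
        have h2 := one_sub_q_mul_pow_ne_zero k
        have h3 := one_sub_q_mul_pow_ne_zero (i + k + 1)
        field_simp
        ring

/-- Triangular numbers. -/
def tri : ℕ → ℕ
  | 0 => 0
  | n + 1 => tri n + (n + 1)

@[simp] lemma tri_zero : tri 0 = 0 := rfl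

lemma tri_succ (n : ℕ) : tri (n + 1) = tri n + (n + 1) := rfl

lemma two_mul_tri (n : ℕ) : 2 * tri n = n * (n + 1) := by
  induction n with
  | zero => rfl
  | succ n ih => rw [tri_succ, Nat.mul_add, ih]; ring

/-- The key identity, by induction on `n`, with a general parameter `a`. -/
lemma key : ∀ (n : ℕ) (a : K),
    ∑ i ∈ Finset.range (n + 1),
        (-1 : K) ^ i * gb n i * poch (q ^ n * a) i * q ^ (tri i + (n - i) * n)
      = q ^ (2 * n ^ 2) * a ^ n := by
  intro n
  induction n with
  | zero => intro a; simp [poch_zero]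
  | succ n ih =>
    intro a
    set F : ℕ → K := fun i =>
      (-1 : K) ^ i * gb (n + 1) i * poch (q ^ (n + 1) * a) i *
        q ^ (tri i + (n + 1 - i) * (n + 1)) with hF
    set G : ℕ → K := fun j =>
      (-1 : K) ^ j * q ^ j * gb n j * poch (q ^ (n + 1) * a) j *
        q ^ (tri j + (n + 1 - j) * (n + 1)) with hG
    set B : ℕ → K := fun i =>
      (-1 : K) ^ i * gb n i * poch (q ^ n * (q ^ 2 * a)) i * q ^ (tri i + (n - i) * n) with hB
    set C : ℕ → K := fun i =>
      (-1 : K) ^ i * gb n i * poch (q ^ n * (q * a)) i * q ^ (tri i + (n - i) * n) with hC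
    have c1 : ∀ i ∈ Finset.range (n + 1),
        F (i + 1) = G (i + 1) - (1 - q ^ (n + 1) * a) * q ^ (n + 1) * B i := by
      intro i hi
      have hi' : i ≤ n := by simpa [Nat.lt_succ_iff] using hi
      obtain ⟨k, rfl⟩ : ∃ k, n = i + k := ⟨n - i, by omega⟩
      simp only [hF, hG, hB]
      rw [gb_succ_succ, tri_succ]
      have hpoch : poch (q ^ (i + k + 1) * a) (i + 1)
          = (1 - q ^ (i + k + 1) * a) * poch (q ^ (i + k) * (q ^ 2 * a)) i := by
        rw [poch_succ']
        congr 2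
        ring
      rw [hpoch]
      have e1 : i + k + 1 - (i + 1) = k := by omega
      have e2 : i + k - i = k := by omega
      rw [e1, e2]
      ring
    have c3 : ∀ j ∈ Finset.range (n + 1), G j = q ^ (2 * n + 1) * C j := by
      intro j hj
      have hj' : j ≤ n := by simpa [Nat.lt_succ_iff] using hj
      obtain ⟨k, rfl⟩ : ∃ k, n = j + k := ⟨n - j, by omega⟩
      simp only [hG, hC]
      have hpoch : poch (q ^ (j + k + 1) * a) j = poch (q ^ (j + k) * (q * a)) j := by
        congr 1
        ring
      rw [hpoch]
      have e1 : j + k + 1 - j = k + 1 := by omega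
      have e2 : j + k - j = k := by omega
      rw [e1, e2]
      ring
    have hGtop : G (n + 1) = 0 := by
      simp only [hG, gb_of_lt n (n + 1) (by omega)]
      ring
    have hsum1 : ∑ i ∈ Finset.range (n + 2), F i
        = (∑ i ∈ Finset.range (n + 1), F (i + 1)) + F 0 := Finset.sum_range_succ' F (n + 1)
    have hsum2 : ∑ i ∈ Finset.range (n + 2), G i
        = (∑ i ∈ Finset.range (n + 1), G (i + 1)) + G 0 := Finset.sum_range_succ' G (n + 1)
    have hsum3 : ∑ i ∈ Finset.range (n + 2), G i
        = (∑ i ∈ Finset.range (n + 1), G i) + G (n + 1) := Finset.sum_range_succ G (n + 1)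
    have hGshift : ∑ i ∈ Finset.range (n + 1), G (i + 1)
        = (∑ i ∈ Finset.range (n + 1), G i) - G 0 := by
      rw [eq_sub_iff_add_eq, ← hsum2, hsum3, hGtop, add_zero]
    have hGsum : ∑ i ∈ Finset.range (n + 1), G i
        = q ^ (2 * n + 1) * (q ^ (2 * n ^ 2) * (q * a) ^ n) := by
      rw [Finset.sum_congr rfl c3, ← Finset.mul_sum, ih (q * a)]
    have hBsum : ∑ i ∈ Finset.range (n + 1), B i = q ^ (2 * n ^ 2) * (q ^ 2 * a) ^ n :=
      ih (q ^ 2 * a)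
    have hF0 : F 0 = q ^ ((n + 1) * (n + 1)) := by
      simp [hF, poch_zero]
    have hG0 : G 0 = q ^ ((n + 1) * (n + 1)) := by
      simp [hG, poch_zero]
    calc ∑ i ∈ Finset.range (n + 2), F i
        = (∑ i ∈ Finset.range (n + 1), F (i + 1)) + F 0 := hsum1
      _ = (∑ i ∈ Finset.range (n + 1),
            (G (i + 1) - (1 - q ^ (n + 1) * a) * q ^ (n + 1) * B i)) + F 0 := by
          rw [Finset.sum_congr rfl c1]
      _ = (∑ i ∈ Finset.range (n + 1), G (i + 1))
            - (1 - q ^ (n + 1) * a) * q ^ (n + 1) * (∑ i ∈ Finset.range (n + 1), B i)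
            + F 0 := by
          rw [Finset.sum_sub_distrib, ← Finset.mul_sum]
      _ = q ^ (2 * n + 1) * (q ^ (2 * n ^ 2) * (q * a) ^ n)
            - (1 - q ^ (n + 1) * a) * q ^ (n + 1) * (q ^ (2 * n ^ 2) * (q ^ 2 * a) ^ n) := by
          rw [hGshift, hGsum, hBsum, hF0, hG0]; ring
      _ = q ^ (2 * (n + 1) ^ 2) * a ^ (n + 1) := by ring

theorem gauss_sum_identity (n : ℕ) :
    ∑ i ∈ Finset.range (n + 1),
        (-1 : K) ^ i * (poch q n / (poch q i * poch q (n - i))) *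
          poch (q ^ (n : ℤ) * z) i * q ^ ((i : ℤ) * ((i : ℤ) + 1) / 2 - (i : ℤ) * (n : ℤ))
      = q ^ ((n : ℤ) ^ 2) * z ^ n := by
  have hq := q_ne_zero
  have hpt : ∀ i ∈ Finset.range (n + 1),
      (-1 : K) ^ i * (poch q n / (poch q i * poch q (n - i))) *
          poch (q ^ (n : ℤ) * z) i * q ^ ((i : ℤ) * ((i : ℤ) + 1) / 2 - (i : ℤ) * (n : ℤ))
        = ((-1 : K) ^ i * gb n i * poch (q ^ n * z) i * q ^ (tri i + (n - i) * n))
            * (q ^ (n ^ 2 : ℕ))⁻¹ := by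
    intro i hi
    have hi' : i ≤ n := by simpa [Nat.lt_succ_iff] using hi
    have hzn : (q : K) ^ (n : ℤ) = q ^ n := zpow_natCast q n
    have hexp : (i : ℤ) * ((i : ℤ) + 1) / 2 - (i : ℤ) * (n : ℤ)
        = ((tri i + (n - i) * n : ℕ) : ℤ) - ((n ^ 2 : ℕ) : ℤ) := by
      have h2 : (i : ℤ) * ((i : ℤ) + 1) = 2 * (tri i : ℤ) := by
        exact_mod_cast (two_mul_tri i).symm
      rw [h2, Int.mul_ediv_cancel_left _ two_ne_zero]
      push_cast [Nat.cast_sub hi']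
      ring
    rw [hzn, gb_eq_ratio n i hi', hexp, zpow_sub₀ hq, zpow_natCast, zpow_natCast]
    ring
  rw [Finset.sum_congr rfl hpt, ← Finset.sum_mul, key n z]
  have hz2 : (q : K) ^ ((n : ℤ) ^ 2) = q ^ (n ^ 2 : ℕ) := by
    rw [← zpow_natCast]
    norm_cast
  rw [hz2]
  have h2 : (q : K) ^ (2 * n ^ 2) = q ^ (n ^ 2) * q ^ (n ^ 2) := by
    rw [← pow_add]; ring_nf
  rw [h2]
  field_simp

end
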